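/- arXiv:math-ph/0012012 — 4 statements merged into one kernel-verified Lean document; each statement's English description precedes it below -/
import Mathlib

section
/- Let ψ : ℝ³ → ℂ² be infinitely differentiable. Define the Minkowski Dirac operator D_M ψ = −γ₀ ∂₀ψ + γ₁ ∂₁ψ + γ₂ ∂₂ψ and the full Lorentz symmetry generators T₂₁ψ = −(x¹∂₂ψ − x²∂₁ψ) + ω₂₁·ψ, T₀₂ψ = −(x⁰∂₂ψ + x²∂₀ψ) + ω₀₂·ψ, T₀₁ψ = −(x⁰∂₁ψ + x¹∂₀ψ) + ω₀₁·ψ. Then D_M commutes with each of T₂₁, T₀₂, T₀₁: for every such ψ, D_M(T_{ij}ψ) = T_{ij}(D_Mψ). -/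
open Complex Matrix

/-- Partial derivative in the `μ`-th coordinate direction of a spinor field on `ℝ³`. -/
noncomputable def pd (μ : Fin 3) (ψ : (Fin 3 → ℝ) → (Fin 2 → ℂ)) :
    (Fin 3 → ℝ) → (Fin 2 → ℂ) :=
  fun x => fderiv ℝ ψ x (Pi.single μ 1)

/-- The gamma matrix `γ₀`. -/
noncomputable def γ₀ : Matrix (Fin 2) (Fin 2) ℂ := !![I, 0; 0, -I]

/-- The gamma matrix `γ₁`. -/
noncomputable def γ₁ : Matrix (Fin 2) (Fin 2) ℂ := !![0, -I; I, 0]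

/-- The gamma matrix `γ₂`. -/
noncomputable def γ₂ : Matrix (Fin 2) (Fin 2) ℂ := !![0, 1; 1, 0]

/-- The spin generator `ω₂₁ = (1/2)γ₀`. -/
noncomputable def ω₂₁ : Matrix (Fin 2) (Fin 2) ℂ := (1 / 2 : ℂ) • γ₀

/-- The spin generator `ω₀₂ = −(1/2)γ₁`. -/
noncomputable def ω₀₂ : Matrix (Fin 2) (Fin 2) ℂ := -((1 / 2 : ℂ) • γ₁)

/-- The spin generator `ω₀₁ = (1/2)γ₂`. -/
noncomputable def ω₀₁ : Matrix (Fin 2) (Fin 2) ℂ := (1 / 2 : ℂ) • γ₂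

/-- The Minkowski Dirac operator `D_M ψ = −γ₀ ∂₀ψ + γ₁ ∂₁ψ + γ₂ ∂₂ψ`
(with raised index `γ^0 = −γ₀` for signature (−,+,+)). -/
noncomputable def DiracM (ψ : (Fin 3 → ℝ) → (Fin 2 → ℂ)) :
    (Fin 3 → ℝ) → (Fin 2 → ℂ) :=
  fun x => -(γ₀.mulVec (pd 0 ψ x)) + γ₁.mulVec (pd 1 ψ x) + γ₂.mulVec (pd 2 ψ x)

/-- The full Lorentz generator `T₂₁ψ = −(x¹∂₂ψ − x²∂₁ψ) + ω₂₁·ψ`. -/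
noncomputable def T₂₁ (ψ : (Fin 3 → ℝ) → (Fin 2 → ℂ)) :
    (Fin 3 → ℝ) → (Fin 2 → ℂ) :=
  fun x => -((x 1 : ℂ) • pd 2 ψ x - (x 2 : ℂ) • pd 1 ψ x) + ω₂₁.mulVec (ψ x)

/-- The full Lorentz generator `T₀₂ψ = −(x⁰∂₂ψ + x²∂₀ψ) + ω₀₂·ψ`. -/
noncomputable def T₀₂ (ψ : (Fin 3 → ℝ) → (Fin 2 → ℂ)) :
    (Fin 3 → ℝ) → (Fin 2 → ℂ) :=
  fun x => -((x 0 : ℂ) • pd 2 ψ x + (x 2 : ℂ) • pd 0 ψ x) + ω₀₂.mulVec (ψ x)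

/-- The full Lorentz generator `T₀₁ψ = −(x⁰∂₁ψ + x¹∂₀ψ) + ω₀₁·ψ`. -/
noncomputable def T₀₁ (ψ : (Fin 3 → ℝ) → (Fin 2 → ℂ)) :
    (Fin 3 → ℝ) → (Fin 2 → ℂ) :=
  fun x => -((x 0 : ℂ) • pd 1 ψ x + (x 1 : ℂ) • pd 0 ψ x) + ω₀₁.mulVec (ψ x)


section Aux

/-- pd preserves smoothness. -/
lemma contDiff_pd {ψ : (Fin 3 → ℝ) → (Fin 2 → ℂ)} (hψ : ContDiff ℝ (⊤ : ℕ∞) ψ) (μ : Fin 3) :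
    ContDiff ℝ (⊤ : ℕ∞) (pd μ ψ) := by
  have h := hψ.fderiv_right (m := (⊤ : ℕ∞)) (by simp)
  exact h.clm_apply contDiff_const

lemma pd_add {f g : (Fin 3 → ℝ) → (Fin 2 → ℂ)} (hf : Differentiable ℝ f)
    (hg : Differentiable ℝ g) (μ : Fin 3) :
    pd μ (fun x => f x + g x) = fun x => pd μ f x + pd μ g x := by
  funext x; simp [pd, fderiv_fun_add (hf x) (hg x)]

lemma pd_neg (f : (Fin 3 → ℝ) → (Fin 2 → ℂ)) (μ : Fin 3) :
    pd μ (fun x => -f x) = fun x => -pd μ f x := by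
  funext x; simp [pd, fderiv_neg]

lemma pd_sub {f g : (Fin 3 → ℝ) → (Fin 2 → ℂ)} (hf : Differentiable ℝ f)
    (hg : Differentiable ℝ g) (μ : Fin 3) :
    pd μ (fun x => f x - g x) = fun x => pd μ f x - pd μ g x := by
  funext x; simp [pd, fderiv_fun_sub (hf x) (hg x)]

lemma pd_mulVec (A : Matrix (Fin 2) (Fin 2) ℂ) {f : (Fin 3 → ℝ) → (Fin 2 → ℂ)}
    (hf : Differentiable ℝ f) (μ : Fin 3) :
    pd μ (fun x => A.mulVec (f x)) = fun x => A.mulVec (pd μ f x) := by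
  funext x
  have hL : IsBoundedLinearMap ℝ (fun v : Fin 2 → ℂ => A.mulVec v) :=
    (A.mulVecLin.restrictScalars ℝ).toContinuousLinearMap.isBoundedLinearMap
  set L := hL.toContinuousLinearMap with hLdef
  have : HasFDerivAt (fun x => A.mulVec (f x)) (L.comp (fderiv ℝ f x)) x :=
    (L.hasFDerivAt.comp x (hf x).hasFDerivAt)
  simp only [pd, this.fderiv]
  rfl

lemma diff_mulVec (A : Matrix (Fin 2) (Fin 2) ℂ) {f : (Fin 3 → ℝ) → (Fin 2 → ℂ)}
    (hf : Differentiable ℝ f) :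
    Differentiable ℝ (fun x => A.mulVec (f x)) := by
  have hL : IsBoundedLinearMap ℝ (fun v : Fin 2 → ℂ => A.mulVec v) :=
    (A.mulVecLin.restrictScalars ℝ).toContinuousLinearMap.isBoundedLinearMap
  exact hL.differentiable.comp hf

lemma diff_coord (ν : Fin 3) :
    Differentiable ℝ (fun x : Fin 3 → ℝ => ((x ν : ℝ) : ℂ)) := fun x =>
  (Complex.ofRealCLM.hasFDerivAt.comp x (hasFDerivAt_apply ν x)).differentiableAt

lemma pd_coord_smul (ν : Fin 3) {f : (Fin 3 → ℝ) → (Fin 2 → ℂ)}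
    (hf : Differentiable ℝ f) (μ : Fin 3) :
    pd μ (fun x => (x ν : ℂ) • f x)
      = fun x => (((Pi.single μ 1 : Fin 3 → ℝ) ν : ℝ) : ℂ) • f x + (x ν : ℂ) • pd μ f x := by
  funext x
  have hc : HasFDerivAt (fun x : Fin 3 → ℝ => ((x ν : ℝ) : ℂ))
      (Complex.ofRealCLM.comp (ContinuousLinearMap.proj ν)) x := by
    exact Complex.ofRealCLM.hasFDerivAt.comp x (hasFDerivAt_apply ν x)
  have h := (hc.smul (hf x).hasFDerivAt).fderiv
  simp only [pd]
  rw [show (fun x : Fin 3 → ℝ => ((x ν : ℝ) : ℂ) • f x) = (fun x : Fin 3 → ℝ => ((x ν : ℝ) : ℂ)) • f from rfl, h]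
  simp [add_comm]

lemma pd_comm {ψ : (Fin 3 → ℝ) → (Fin 2 → ℂ)} (hψ : ContDiff ℝ (⊤ : ℕ∞) ψ) (μ ν : Fin 3) :
    pd μ (pd ν ψ) = pd ν (pd μ ψ) := by
  funext x
  have hd : Differentiable ℝ (fderiv ℝ ψ) :=
    (hψ.fderiv_right (m := (⊤ : ℕ∞)) (by simp)).differentiable (by simp)
  have key : ∀ a b : Fin 3,
      pd a (pd b ψ) x = fderiv ℝ (fderiv ℝ ψ) x (Pi.single a 1) (Pi.single b 1) := by
    intro a b
    have h := fderiv_clm_apply (hd x) (differentiableAt_const (Pi.single b (1:ℝ)))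
    show fderiv ℝ (fun y => fderiv ℝ ψ y (Pi.single b 1)) x (Pi.single a 1) = _
    rw [h]
    simp
  rw [key μ ν, key ν μ]
  exact (hψ.contDiffAt.isSymmSndFDerivAt (by rw [minSmoothness_of_isRCLikeNormedField]; exact le_trans (le_of_eq (by norm_cast)) (WithTop.coe_le_coe.mpr (le_top : (2:ℕ∞) ≤ ⊤)))) _ _

lemma g00 : γ₀ * γ₀ = -1 := by
  ext i j; fin_cases i <;> fin_cases j <;>
    simp [γ₀, Matrix.mul_apply, Fin.sum_univ_succ, Matrix.one_apply]
lemma g01 : γ₀ * γ₁ = γ₂ := by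
  ext i j; fin_cases i <;> fin_cases j <;>
    simp [γ₀, γ₁, γ₂, Matrix.mul_apply, Fin.sum_univ_succ]
lemma g10 : γ₁ * γ₀ = -γ₂ := by
  ext i j; fin_cases i <;> fin_cases j <;>
    simp [γ₀, γ₁, γ₂, Matrix.mul_apply, Fin.sum_univ_succ]
lemma g02 : γ₀ * γ₂ = -γ₁ := by
  ext i j; fin_cases i <;> fin_cases j <;>
    simp [γ₀, γ₁, γ₂, Matrix.mul_apply, Fin.sum_univ_succ]
lemma g20 : γ₂ * γ₀ = γ₁ := by
  ext i j; fin_cases i <;> fin_cases j <;>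
    simp [γ₀, γ₁, γ₂, Matrix.mul_apply, Fin.sum_univ_succ]
lemma g12 : γ₁ * γ₂ = -γ₀ := by
  ext i j; fin_cases i <;> fin_cases j <;>
    simp [γ₀, γ₁, γ₂, Matrix.mul_apply, Fin.sum_univ_succ]
lemma g21 : γ₂ * γ₁ = γ₀ := by
  ext i j; fin_cases i <;> fin_cases j <;>
    simp [γ₀, γ₁, γ₂, Matrix.mul_apply, Fin.sum_univ_succ]
lemma g11 : γ₁ * γ₁ = 1 := by
  ext i j; fin_cases i <;> fin_cases j <;>
    simp [γ₁, Matrix.mul_apply, Fin.sum_univ_succ, Matrix.one_apply]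
lemma g22 : γ₂ * γ₂ = 1 := by
  ext i j; fin_cases i <;> fin_cases j <;>
    simp [γ₂, Matrix.mul_apply, Fin.sum_univ_succ, Matrix.one_apply]

end Aux

/-- **The Minkowski Dirac operator commutes with the full Lorentz symmetry generators**
`T₂₁`, `T₀₂`, `T₀₁` on smooth spinor fields. -/
theorem diracM_commutes_with_lorentz_generators
    (ψ : (Fin 3 → ℝ) → (Fin 2 → ℂ)) (hψ : ContDiff ℝ (⊤ : ℕ∞) ψ) :
    DiracM (T₂₁ ψ) = T₂₁ (DiracM ψ) ∧
    DiracM (T₀₂ ψ) = T₀₂ (DiracM ψ) ∧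
    DiracM (T₀₁ ψ) = T₀₁ (DiracM ψ)  := by
  have hd : Differentiable ℝ ψ := hψ.differentiable (by simp)
  have hpdc : ∀ μ, ContDiff ℝ (⊤ : ℕ∞) (pd μ ψ) := fun μ => contDiff_pd hψ μ
  have hpd : ∀ μ, Differentiable ℝ (pd μ ψ) := fun μ => (hpdc μ).differentiable (by simp)
  have hD : ∀ μ : Fin 3, pd μ (DiracM ψ) = fun x =>
      -(γ₀.mulVec (pd μ (pd 0 ψ) x)) + γ₁.mulVec (pd μ (pd 1 ψ) x)
        + γ₂.mulVec (pd μ (pd 2 ψ) x) := by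
    intro μ
    unfold DiracM
    rw [pd_add (((diff_mulVec γ₀ (hpd 0)).fun_neg).fun_add (diff_mulVec γ₁ (hpd 1)))
        (diff_mulVec γ₂ (hpd 2)),
      pd_add ((diff_mulVec γ₀ (hpd 0)).fun_neg) (diff_mulVec γ₁ (hpd 1)),
      pd_neg, pd_mulVec _ (hpd 0), pd_mulVec _ (hpd 1), pd_mulVec _ (hpd 2)]
  have hT21 : ∀ μ : Fin 3, pd μ (T₂₁ ψ) = fun x =>
      -(((((Pi.single μ 1 : Fin 3 → ℝ) 1 : ℝ) : ℂ) • pd 2 ψ x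
          + (x 1 : ℂ) • pd μ (pd 2 ψ) x)
        - ((((Pi.single μ 1 : Fin 3 → ℝ) 2 : ℝ) : ℂ) • pd 1 ψ x
          + (x 2 : ℂ) • pd μ (pd 1 ψ) x))
      + ω₂₁.mulVec (pd μ ψ x) := by
    intro μ
    unfold T₂₁
    rw [pd_add (((diff_coord 1).fun_smul (hpd 2)).fun_sub ((diff_coord 2).fun_smul (hpd 1))).fun_neg
        (diff_mulVec ω₂₁ hd),
      pd_neg, pd_sub ((diff_coord 1).fun_smul (hpd 2)) ((diff_coord 2).fun_smul (hpd 1)),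
      pd_coord_smul 1 (hpd 2), pd_coord_smul 2 (hpd 1), pd_mulVec _ hd]
  have hT02 : ∀ μ : Fin 3, pd μ (T₀₂ ψ) = fun x =>
      -(((((Pi.single μ 1 : Fin 3 → ℝ) 0 : ℝ) : ℂ) • pd 2 ψ x
          + (x 0 : ℂ) • pd μ (pd 2 ψ) x)
        + ((((Pi.single μ 1 : Fin 3 → ℝ) 2 : ℝ) : ℂ) • pd 0 ψ x
          + (x 2 : ℂ) • pd μ (pd 0 ψ) x))
      + ω₀₂.mulVec (pd μ ψ x) := by
    intro μ
    unfold T₀₂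
    rw [pd_add (((diff_coord 0).fun_smul (hpd 2)).fun_add ((diff_coord 2).fun_smul (hpd 0))).fun_neg
        (diff_mulVec ω₀₂ hd),
      pd_neg, pd_add ((diff_coord 0).fun_smul (hpd 2)) ((diff_coord 2).fun_smul (hpd 0)),
      pd_coord_smul 0 (hpd 2), pd_coord_smul 2 (hpd 0), pd_mulVec _ hd]
  have hT01 : ∀ μ : Fin 3, pd μ (T₀₁ ψ) = fun x =>
      -(((((Pi.single μ 1 : Fin 3 → ℝ) 0 : ℝ) : ℂ) • pd 1 ψ x
          + (x 0 : ℂ) • pd μ (pd 1 ψ) x)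
        + ((((Pi.single μ 1 : Fin 3 → ℝ) 1 : ℝ) : ℂ) • pd 0 ψ x
          + (x 1 : ℂ) • pd μ (pd 0 ψ) x))
      + ω₀₁.mulVec (pd μ ψ x) := by
    intro μ
    unfold T₀₁
    rw [pd_add (((diff_coord 0).fun_smul (hpd 1)).fun_add ((diff_coord 1).fun_smul (hpd 0))).fun_neg
        (diff_mulVec ω₀₁ hd),
      pd_neg, pd_add ((diff_coord 0).fun_smul (hpd 1)) ((diff_coord 1).fun_smul (hpd 0)),
      pd_coord_smul 0 (hpd 1), pd_coord_smul 1 (hpd 0), pd_mulVec _ hd]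
  have hsym10 := pd_comm hψ 1 0
  have hsym20 := pd_comm hψ 2 0
  have hsym21 := pd_comm hψ 2 1
  refine ⟨?_, ?_, ?_⟩ <;> funext x
  · show -(γ₀.mulVec (pd 0 (T₂₁ ψ) x)) + γ₁.mulVec (pd 1 (T₂₁ ψ) x)
        + γ₂.mulVec (pd 2 (T₂₁ ψ) x)
      = -((x 1 : ℂ) • pd 2 (DiracM ψ) x - (x 2 : ℂ) • pd 1 (DiracM ψ) x)
        + ω₂₁.mulVec (DiracM ψ x)
    rw [hT21 0, hT21 1, hT21 2, hD 1, hD 2]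
    simp only [DiracM]
    rw [hsym10, hsym20, hsym21]
    norm_num [Pi.single_apply, Fin.ext_iff, -Matrix.mulVec_fin_two]
    simp only [ω₂₁, Matrix.mulVec_add, Matrix.mulVec_sub, Matrix.mulVec_neg,
      Matrix.mulVec_smul, Matrix.mulVec_mulVec, Matrix.smul_mulVec,
      mul_smul_comm, smul_mul_assoc, g00, g01, g10, g02, g20, g12, g21, g11, g22,
      Matrix.neg_mulVec, Matrix.one_mulVec]
    module
  · show -(γ₀.mulVec (pd 0 (T₀₂ ψ) x)) + γ₁.mulVec (pd 1 (T₀₂ ψ) x)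
        + γ₂.mulVec (pd 2 (T₀₂ ψ) x)
      = -((x 0 : ℂ) • pd 2 (DiracM ψ) x + (x 2 : ℂ) • pd 0 (DiracM ψ) x)
        + ω₀₂.mulVec (DiracM ψ x)
    rw [hT02 0, hT02 1, hT02 2, hD 0, hD 2]
    simp only [DiracM]
    rw [hsym10, hsym20, hsym21]
    norm_num [Pi.single_apply, Fin.ext_iff, -Matrix.mulVec_fin_two]
    simp only [ω₀₂, Matrix.mulVec_add, Matrix.mulVec_sub, Matrix.mulVec_neg,
      Matrix.mulVec_smul, Matrix.mulVec_mulVec, Matrix.smul_mulVec,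
      mul_smul_comm, smul_mul_assoc, Matrix.mul_neg, Matrix.neg_mul,
      g00, g01, g10, g02, g20, g12, g21, g11, g22,
      Matrix.neg_mulVec, Matrix.one_mulVec]
    module
  · show -(γ₀.mulVec (pd 0 (T₀₁ ψ) x)) + γ₁.mulVec (pd 1 (T₀₁ ψ) x)
        + γ₂.mulVec (pd 2 (T₀₁ ψ) x)
      = -((x 0 : ℂ) • pd 1 (DiracM ψ) x + (x 1 : ℂ) • pd 0 (DiracM ψ) x)
        + ω₀₁.mulVec (DiracM ψ x)
    rw [hT01 0, hT01 1, hT01 2, hD 0, hD 1]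
    simp only [DiracM]
    rw [hsym10, hsym20, hsym21]
    norm_num [Pi.single_apply, Fin.ext_iff, -Matrix.mulVec_fin_two]
    simp only [ω₀₁, Matrix.mulVec_add, Matrix.mulVec_sub, Matrix.mulVec_neg,
      Matrix.mulVec_smul, Matrix.mulVec_mulVec, Matrix.smul_mulVec,
      mul_smul_comm, smul_mul_assoc, g00, g01, g10, g02, g20, g12, g21, g11, g22,
      Matrix.neg_mulVec, Matrix.one_mulVec]
    module
end

section
/- Let c be a real number and let u₊, u₋ be 2×2 complex matrices. Suppose P, Q : ℤ → Matrix(2,2,ℂ) satisfy the second-difference recursions P(k+1) − 2P(k) + P(k−1) = 0 and Q(k+1) − 2Q(k) + Q(k−1) = 0 for all k ∈ ℤ, together with the adjoint relation (P k)ᴴ = −Q(k+2) for all k, and the initial conditions P 0 = c • u₊ and Q 0 = c • u₋. Then for all k ∈ ℤ: P k = c • ((k/2) • (u₊ + u₋ᴴ) + u₊) and Q k = c • ((−k/2) • (u₋ + u₊ᴴ) + u₋). -/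
open Matrix

/-! Vanishing second differences make `P` affine in `k`. The adjoint relation expresses `Q k` as
`-(P (k - 2))ᴴ`, so `Q` is determined by `P`; reading it at `k = 0` gives
`P (-2) = -(c • u₋ᴴ)`, which fixes the slope of `P`. -/

section SecondDifference

variable {M : Type*} [AddCommGroup M] {f : ℤ → M}

theorem eq_add_zsmul_of_sub_eq {d : M} (h : ∀ k, f (k + 1) - f k = d) (k : ℤ) :
    f k = f 0 + k • d := by
  have hper : Function.Periodic (fun k => f k - k • d) 1 := fun k => by
    simp only [add_smul, one_smul, ← h k]
    abel
  simpa [sub_eq_iff_eq_add, add_comm] using hper.int_mul_eq k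

theorem sub_eq_of_second_diff_eq_zero (h : ∀ k, f (k + 1) - 2 • f k + f (k - 1) = 0) (k : ℤ) :
    f (k + 1) - f k = f 1 - f 0 := by
  have hper : Function.Periodic (fun k => f (k + 1) - f k) 1 := fun k => by
    have := h (k + 1)
    rw [add_sub_cancel_right, two_smul] at this
    simp only
    rw [← sub_eq_zero, ← this]
    abel
  simpa using hper.int_mul_eq k

theorem eq_add_zsmul_of_second_diff_eq_zero (h : ∀ k, f (k + 1) - 2 • f k + f (k - 1) = 0)
    (k : ℤ) : f k = f 0 + k • (f 1 - f 0) :=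
  eq_add_zsmul_of_sub_eq (sub_eq_of_second_diff_eq_zero h) k

end SecondDifference

theorem order_one_recursion_solution_general (c : ℝ) (uplus uminus : Matrix (Fin 2) (Fin 2) ℂ)
    (P Q : ℤ → Matrix (Fin 2) (Fin 2) ℂ)
    (hP : ∀ k : ℤ, P (k + 1) - 2 • P k + P (k - 1) = 0)
    (hadj : ∀ k : ℤ, (P k)ᴴ = -Q (k + 2))
    (hP0 : P 0 = c • uplus) (hQ0 : Q 0 = c • uminus) :
    ∀ k : ℤ,
      P k = c • (((k : ℝ) / 2) • (uplus + uminusᴴ) + uplus) ∧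
      Q k = c • ((-(k : ℝ) / 2) • (uminus + uplusᴴ) + uminus) := by
  have hP_affine (k : ℤ) : P k = c • uplus + (k : ℝ) • (P 1 - P 0) := by
    rw [eq_add_zsmul_of_second_diff_eq_zero hP k, hP0, Int.cast_smul_eq_zsmul]
  have hQ_adj (k : ℤ) : Q k = -(P (k - 2))ᴴ := by
    rw [hadj, sub_add_cancel, neg_neg]
  have hslope : P 1 - P 0 = (c / 2 : ℝ) • (uplus + uminusᴴ) := by
    have hP_neg_two : c • uminusᴴ = -P (-2) := by
      simpa [hQ0] using congrArg conjTranspose (hQ_adj 0)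
    rw [hP_affine, Int.cast_neg, Int.cast_ofNat] at hP_neg_two
    linear_combination (norm := module) (-1 / 2 : ℝ) • hP_neg_two
  intro k
  constructor
  · rw [hP_affine, hslope]
    module
  · rw [hQ_adj, hP_affine, hslope]
    simp only [conjTranspose_add, conjTranspose_smul, star_trivial, conjTranspose_conjTranspose]
    push_cast
    module

/-- **Solution of the order-one recursion for the raising and lowering operators of the
de Sitter spectral quadruple.**
If `P, Q : ℤ → Matrix (Fin 2) (Fin 2) ℂ` satisfy the second-difference recursions,
the adjoint relation `(P k)ᴴ = −Q (k+2)` and the initial conditions `P 0 = c • u₊`,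
`Q 0 = c • u₋`, then `P k = c • ((k/2) • (u₊ + u₋ᴴ) + u₊)` and
`Q k = c • ((−k/2) • (u₋ + u₊ᴴ) + u₋)` for all `k ∈ ℤ`. -/
theorem order_one_recursion_solution (c : ℝ) (uplus uminus : Matrix (Fin 2) (Fin 2) ℂ)
    (P Q : ℤ → Matrix (Fin 2) (Fin 2) ℂ)
    (hP : ∀ k : ℤ, P (k + 1) - 2 • P k + P (k - 1) = 0)
    (hQ : ∀ k : ℤ, Q (k + 1) - 2 • Q k + Q (k - 1) = 0)
    (hadj : ∀ k : ℤ, (P k)ᴴ = -Q (k + 2))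
    (hP0 : P 0 = c • uplus) (hQ0 : Q 0 = c • uminus) :
    ∀ k : ℤ,
      P k = c • (((k : ℝ) / 2) • (uplus + uminusᴴ) + uplus) ∧
      Q k = c • ((-(k : ℝ) / 2) • (uminus + uplusᴴ) + uminus) :=
  order_one_recursion_solution_general c uplus uminus P Q hP hadj hP0 hQ0
end

section
/- For all real a, θ and all real n, the matrices satisfy M₊(n − 1/2) · M₋(n − 1/2) − M₋(n + 1/2) · M₊(n + 1/2) = (2n) • 1, where 1 is the 2×2 identity matrix. (This is the sl₂(ℝ) commutation relation [T₊, T₋] = −2i T₂₁ evaluated on the n-th eigenspace of T₂₁, since T₊(n−1)T₋(n) − T₋(n+1)T₊(n) must equal 2n·1.) -/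
open Complex Matrix

/-!
`M₊(s)` and `M₋(s)` commute, and their product is the scalar matrix `−(a² + s²)`: the
`ia`-terms cancel off the diagonal, and `tanh² θ + 1 / cosh² θ = 1` collapses the `s²`-terms.
The commutator is therefore `((n + 1/2)² − (n − 1/2)²) • 1 = 2n • 1`.
-/

/-- The matrix block of the raising operator `T₊(n)` at `s = n + 1/2` (with `a = Rm`). -/
noncomputable def Mplus (a θ s : ℝ) : Matrix (Fin 2) (Fin 2) ℂ :=
  !![-(I * a) + ((s * Real.tanh θ : ℝ) : ℂ), ((s / Real.cosh θ : ℝ) : ℂ);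
     -((s / Real.cosh θ : ℝ) : ℂ), I * a + ((s * Real.tanh θ : ℝ) : ℂ)]

/-- The matrix block of the lowering operator `T₋(n)` at `s = n − 1/2` (with `a = Rm`). -/
noncomputable def Mminus (a θ s : ℝ) : Matrix (Fin 2) (Fin 2) ℂ :=
  !![-(I * a) - ((s * Real.tanh θ : ℝ) : ℂ), ((s / Real.cosh θ : ℝ) : ℂ);
     -((s / Real.cosh θ : ℝ) : ℂ), I * a - ((s * Real.tanh θ : ℝ) : ℂ)]

theorem Real.tanh_sq_add_inv_cosh_sq (x : ℝ) : tanh x ^ 2 + (cosh x)⁻¹ ^ 2 = 1 := by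
  have hcosh : cosh x ≠ 0 := (cosh_pos x).ne'
  rw [tanh_eq_sinh_div_cosh]
  field_simp
  linear_combination -cosh_sq' x

section

variable {R : Type*} [CommRing R]

theorem Matrix.fin_two_add_mul_fin_two_sub (x y z : R) :
    !![-x + y, z; -z, x + y] * !![-x - y, z; -z, x - y] =
      (x ^ 2 - y ^ 2 - z ^ 2) • (1 : Matrix (Fin 2) (Fin 2) R) := by
  ext i j
  fin_cases i <;> fin_cases j <;> simp [Matrix.mul_apply] <;> ring

theorem Matrix.fin_two_sub_mul_fin_two_add (x y z : R) :
    !![-x - y, z; -z, x - y] * !![-x + y, z; -z, x + y] =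
      (x ^ 2 - y ^ 2 - z ^ 2) • (1 : Matrix (Fin 2) (Fin 2) R) := by
  ext i j
  fin_cases i <;> fin_cases j <;> simp [Matrix.mul_apply] <;> ring

end

theorem I_mul_sq_sub_mul_tanh_sq_sub_div_cosh_sq (a θ s : ℝ) :
    (I * a) ^ 2 - ((s * Real.tanh θ : ℝ) : ℂ) ^ 2 - ((s / Real.cosh θ : ℝ) : ℂ) ^ 2 =
      ((-(a ^ 2 + s ^ 2) : ℝ) : ℂ) := by
  have hr : (s * Real.tanh θ) ^ 2 + (s / Real.cosh θ) ^ 2 = s ^ 2 := by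
    linear_combination s ^ 2 * Real.tanh_sq_add_inv_cosh_sq θ
  have hc : ((s * Real.tanh θ : ℝ) : ℂ) ^ 2 + ((s / Real.cosh θ : ℝ) : ℂ) ^ 2 = (s : ℂ) ^ 2 := by
    exact_mod_cast hr
  simp only [mul_pow, I_sq, ofReal_neg, ofReal_add, ofReal_pow]
  linear_combination -hc

theorem Mplus_mul_Mminus (a θ s : ℝ) :
    Mplus a θ s * Mminus a θ s = (-(a ^ 2 + s ^ 2)) • (1 : Matrix (Fin 2) (Fin 2) ℂ) := by
  rw [Mplus, Mminus, Matrix.fin_two_add_mul_fin_two_sub,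
    I_mul_sq_sub_mul_tanh_sq_sub_div_cosh_sq, ← Complex.coe_smul]

theorem Mminus_mul_Mplus (a θ s : ℝ) :
    Mminus a θ s * Mplus a θ s = (-(a ^ 2 + s ^ 2)) • (1 : Matrix (Fin 2) (Fin 2) ℂ) := by
  rw [Mplus, Mminus, Matrix.fin_two_sub_mul_fin_two_add,
    I_mul_sq_sub_mul_tanh_sq_sub_div_cosh_sq, ← Complex.coe_smul]

/-- **The `sl₂(ℝ)` relation `[T₊, T₋] = −2i T₂₁` on the `n`-th eigenspace of `T₂₁`**:
for all real `a`, `θ`, `n`,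
`M₊(n − 1/2)·M₋(n − 1/2) − M₋(n + 1/2)·M₊(n + 1/2) = (2n) • 1`. -/
theorem Mplus_Mminus_commutation (a θ n : ℝ) :
    Mplus a θ (n - 1 / 2) * Mminus a θ (n - 1 / 2)
      - Mminus a θ (n + 1 / 2) * Mplus a θ (n + 1 / 2)
      = (2 * n) • (1 : Matrix (Fin 2) (Fin 2) ℂ) := by
  rw [Mplus_mul_Mminus, Mminus_mul_Mplus, ← sub_smul]
  congr 1
  ring
end

section
/- Let m, z₁, z₂ ∈ ℂ. The ℓ²-operator norm of the commutator [D, π(z₁,z₂)] = D·π(z₁,z₂) − π(z₁,z₂)·D equals |m| · |z₁ − z₂|. -/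
open Matrix
open scoped Matrix.Norms.L2Operator

/-- The Dirac operator of the two-point finite spectral triple. -/
noncomputable def Dir (m : ℂ) : Matrix (Fin 3) (Fin 3) ℂ :=
  !![0, m, starRingEnd ℂ m; starRingEnd ℂ m, 0, 0; m, 0, 0]

/-- The representation of the algebra `ℂ ⊕ ℂ` on `ℂ³`. -/
noncomputable def π' (z₁ z₂ : ℂ) : Matrix (Fin 3) (Fin 3) ℂ :=
  Matrix.diagonal ![z₁, z₁, z₂]

/-!
Since `π(z₁, z₂) = z₂ • 1 + (z₁ - z₂) • π(1, 0)`, the commutator is `(z₁ - z₂) • X` with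
`X = [D, π(1, 0)]`. One computes `Xᴴ X = |m|² • diag(1, 0, 1)`, so the C⋆-identity
`‖X‖² = ‖Xᴴ X‖` gives `‖X‖ = |m|`.
-/

theorem commutator_algebraMap_add_smul {R A : Type*} [CommSemiring R] [Ring A] [Algebra R A]
    (X P : A) (c s : R) :
    X * (algebraMap R A c + s • P) - (algebraMap R A c + s • P) * X = s • (X * P - P * X) := by
  rw [mul_add, add_mul, Algebra.commutes, mul_smul_comm, smul_mul_assoc, smul_sub]
  abel

theorem π'_eq_algebraMap_add_smul (z₁ z₂ : ℂ) :
    π' z₁ z₂ = algebraMap ℂ _ z₂ + (z₁ - z₂) • π' 1 0 := by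
  ext i j
  fin_cases i <;> fin_cases j <;> simp [π', algebraMap_eq_diagonal]

theorem commutator_Dir_π'_one_zero (m : ℂ) :
    Dir m * π' 1 0 - π' 1 0 * Dir m = !![0, 0, -starRingEnd ℂ m; 0, 0, 0; m, 0, 0] := by
  ext i j
  fin_cases i <;> fin_cases j <;> simp [Dir, π', Matrix.sub_apply, vecMul_diagonal, diagonal_mul]

theorem norm_vec_one_zero_one : ‖(![1, 0, 1] : Fin 3 → ℂ)‖ = 1 := by
  refine le_antisymm (pi_norm_le_iff_of_nonneg zero_le_one |>.2 fun i => ?_) ?_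
  · fin_cases i <;> simp
  · simpa using norm_le_pi_norm (![1, 0, 1] : Fin 3 → ℂ) 0

theorem norm_commutator_Dir_π'_one_zero (m : ℂ) :
    ‖Dir m * π' 1 0 - π' 1 0 * Dir m‖ = ‖m‖ := by
  set X := Dir m * π' 1 0 - π' 1 0 * Dir m
  have hX : Xᴴ * X = diagonal ((‖m‖ ^ 2 : ℂ) • ![1, 0, 1]) := by
    ext i j
    fin_cases i <;> fin_cases j <;>
      simp [X, commutator_Dir_π'_one_zero, Matrix.mul_apply, Fin.sum_univ_three, Complex.conj_mul']
  have hsq : ‖X‖ * ‖X‖ = ‖m‖ * ‖m‖ := by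
    rw [← l2_opNorm_conjTranspose_mul_self, hX, l2_opNorm_diagonal, norm_smul,
      norm_vec_one_zero_one]
    simp [sq]
  exact (mul_self_inj (norm_nonneg _) (norm_nonneg _)).1 hsq

/-- **Norm of the commutator in the two-point spectral triple**: the ℓ²-operator norm of
`[D, π(z₁,z₂)]` equals `|m| · |z₁ − z₂|`. -/
theorem norm_commutator_two_point (m z₁ z₂ : ℂ) :
    ‖Dir m * π' z₁ z₂ - π' z₁ z₂ * Dir m‖ = ‖m‖ * ‖z₁ - z₂‖ := by
  rw [π'_eq_algebraMap_add_smul, commutator_algebraMap_add_smul, norm_smul,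
    norm_commutator_Dir_π'_one_zero, mul_comm]
end
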